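/- Let d = 2^ρ and suppose for each round r = 1,…,ρ the block containing arm a(i) in M_r is obtained by merging; let X_{t_1}, X_{t_2}^c,…,X_{t_{r−1}}^c be the observed rewards for the complementary blocks at rounds 1,…,r−1 and X_t^c the reward of the round-r coded arm containing a(i). Then a(i)ᵀθ* + (η_t − η_{t_{r−1}} − … − η_{t_1}) = X_t^c − X_{t_{r−1}}^c − … − X_{t_2}^c − X_{t_1}, so the reward of a(i) is decodable with additive noise of variance r (when the η's are independent with variance 1). -/

import Mathlib

/-!
Each round's coded arm is the disjoint union of the previous round's block containing `a(i)` and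
the complementary block, so by induction the round-`r` coded arm sums `a(i)` with all the
complementary blocks of rounds `1, …, r - 1`. Subtracting their observed rewards leaves
`a(i)ᵀθ*` plus a signed sum of `r` independent noises, whose variances add up to `r`.
-/

open MeasureTheory ProbabilityTheory Matrix

theorem Finset.sum_of_succ_eq_union_disjoint {ι M : Type*} [DecidableEq ι] [AddCommMonoid M]
    (f : ι → M) (S D : ℕ → Finset ι) {a m : ℕ} (ham : a ≤ m)
    (h : ∀ k, a ≤ k → k < m → S (k + 1) = S k ∪ D k ∧ Disjoint (S k) (D k)) :
    ∑ j ∈ S m, f j = ∑ j ∈ S a, f j + ∑ k ∈ Finset.Ico a m, ∑ j ∈ D k, f j := by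
  induction m, ham using Nat.le_induction with
  | base => simp
  | succ m ham ih =>
    obtain ⟨hS, hdisj⟩ := h m ham m.lt_succ_self
    rw [hS, Finset.sum_union hdisj, ih fun k hak hkm => h k hak (hkm.trans m.lt_succ_self),
      Finset.sum_Ico_succ_top ham, add_assoc]

theorem ProbabilityTheory.variance_sub_sum_of_pairwise_indepFun {Ω ι : Type*}
    [MeasurableSpace Ω] {μ : Measure Ω} [IsFiniteMeasure μ] [DecidableEq ι]
    {X : ι → Ω → ℝ} {s : Finset ι} {j : ι} (hj : j ∉ s)
    (hX : ∀ i ∈ insert j s, MemLp (X i) 2 μ)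
    (h : Set.Pairwise ↑(insert j s) fun i k => X i ⟂ᵢ[μ] X k) :
    Var[fun ω => X j ω - ∑ i ∈ s, X i ω; μ] = Var[X j; μ] + ∑ i ∈ s, Var[X i; μ] := by
  have hXj := hX j (Finset.mem_insert_self j s)
  have hXs : ∀ i ∈ s, MemLp (X i) 2 μ := fun i hi => hX i (Finset.mem_insert_of_mem hi)
  have hs : Set.Pairwise ↑s fun i k => X i ⟂ᵢ[μ] X k :=
    h.mono (by simp [Finset.coe_insert, Set.subset_insert])
  have hcov : cov[X j, ∑ i ∈ s, X i; μ] = 0 := by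
    rw [covariance_sum_right' hXs hXj]
    refine Finset.sum_eq_zero fun i hi => ?_
    refine (h (by simp) (by simp [hi]) ?_).covariance_eq_zero hXj (hXs i hi)
    rintro rfl
    exact hj hi
  have hfun : (fun ω => X j ω - ∑ i ∈ s, X i ω) = X j - ∑ i ∈ s, X i := by
    ext ω
    simp [Finset.sum_apply]
  rw [hfun, variance_sub hXj (memLp_finsetSum' s hXs), hcov, IndepFun.variance_sum hXs hs]
  ring

theorem stmt17_general {Ω ι : Type*} [MeasurableSpace Ω] (μ : Measure Ω) [IsProbabilityMeasure μ]
    [DecidableEq ι] (n : ℕ) (a : ι → Fin n → ℝ) (θ : Fin n → ℝ)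
    (r : ℕ) (hr : 1 ≤ r) (i : ι)
    (S D : ℕ → Finset ι)
    (hS1 : S 1 = {i})
    (hSk : ∀ k, 1 ≤ k → k < r → S (k + 1) = S k ∪ D k ∧ Disjoint (S k) (D k))
    (η : ℕ → Ω → ℝ)
    (hind : iIndepFun (fun k : Fin (r + 1) => η k) μ)
    (hmem : ∀ k, MemLp (η k) 2 μ)
    (hvar : ∀ k, variance (η k) μ = 1)
    (Y : ℕ → Ω → ℝ)
    (hY : ∀ k, 1 ≤ k → k < r → ∀ ω, Y k ω = (∑ j ∈ D k, a j) ⬝ᵥ θ + η k ω)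
    (X : Ω → ℝ) (hX : ∀ ω, X ω = (∑ j ∈ S r, a j) ⬝ᵥ θ + η r ω) :
    (∀ ω, X ω - ∑ k ∈ Finset.Ico 1 r, Y k ω
        = a i ⬝ᵥ θ + (η r ω - ∑ k ∈ Finset.Ico 1 r, η k ω)) ∧
    variance (fun ω => η r ω - ∑ k ∈ Finset.Ico 1 r, η k ω) μ = r := by
  constructor
  · intro ω
    have hYsum : ∑ k ∈ Finset.Ico 1 r, Y k ω
        = ∑ k ∈ Finset.Ico 1 r, ((∑ j ∈ D k, a j) ⬝ᵥ θ + η k ω) :=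
      Finset.sum_congr rfl fun k hk => hY k (Finset.mem_Ico.1 hk).1 (Finset.mem_Ico.1 hk).2 ω
    rw [hX, Finset.sum_of_succ_eq_union_disjoint a S D hr hSk, hS1, Finset.sum_singleton,
      hYsum, Finset.sum_add_distrib, add_dotProduct, sum_dotProduct]
    ring
  · have hr_notMem : r ∉ Finset.Ico 1 r := by simp
    have hpair : Set.Pairwise ↑(insert r (Finset.Ico 1 r)) fun k l => η k ⟂ᵢ[μ] η l := by
      intro k hk l hl hkl
      have hk' : k < r + 1 := by simp at hk; omega
      have hl' : l < r + 1 := by simp at hl; omega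
      exact hind.indepFun (i := ⟨k, hk'⟩) (j := ⟨l, hl'⟩) (by simpa [Fin.ext_iff] using hkl)
    rw [variance_sub_sum_of_pairwise_indepFun hr_notMem (fun k _ => hmem k) hpair]
    simp only [hvar, Finset.sum_const, Nat.card_Ico, nsmul_eq_mul, mul_one]
    rw [Nat.cast_sub hr]
    ring

/-- Decoding lemma: with nested blocks `S 1 = {i}`, `S (k+1) = S k ∪ D k` (disjoint), coded
rewards `Y k` for the complementary blocks `D k` at rounds `1,…,r−1`, and `X` the reward of
the round-`r` coded arm containing `a(i)`, we have
`X − ∑_{k=1}^{r−1} Y k = a(i)ᵀθ* + (η_r − ∑_{k=1}^{r−1} η_k)`, a noise of variance `r` when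
the `η`'s are independent mean-zero variance-1. -/
theorem stmt17 {Ω ι : Type*} [MeasurableSpace Ω] (μ : Measure Ω) [IsProbabilityMeasure μ]
    [DecidableEq ι] (n : ℕ) (a : ι → Fin n → ℝ) (θ : Fin n → ℝ)
    (r : ℕ) (hr : 1 ≤ r) (i : ι)
    (S D : ℕ → Finset ι)
    (hS1 : S 1 = {i})
    (hSk : ∀ k, 1 ≤ k → k < r → S (k + 1) = S k ∪ D k ∧ Disjoint (S k) (D k))
    (η : ℕ → Ω → ℝ)
    (hind : iIndepFun (fun k : Fin (r + 1) => η k) μ)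
    (hmem : ∀ k, MemLp (η k) 2 μ) (hmean : ∀ k, μ[η k] = 0)
    (hvar : ∀ k, variance (η k) μ = 1)
    (Y : ℕ → Ω → ℝ)
    (hY : ∀ k, 1 ≤ k → k < r → ∀ ω, Y k ω = (∑ j ∈ D k, a j) ⬝ᵥ θ + η k ω)
    (X : Ω → ℝ) (hX : ∀ ω, X ω = (∑ j ∈ S r, a j) ⬝ᵥ θ + η r ω) :
    (∀ ω, X ω - ∑ k ∈ Finset.Ico 1 r, Y k ω
        = a i ⬝ᵥ θ + (η r ω - ∑ k ∈ Finset.Ico 1 r, η k ω)) ∧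
    variance (fun ω => η r ω - ∑ k ∈ Finset.Ico 1 r, η k ω) μ = r :=
  stmt17_general μ n a θ r hr i S D hS1 hSk η hind hmem hvar Y hY X hX
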